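/- Let r, q, s be positive integers with s not a multiple of r, and let t, k be the integers with 0 < t < r and s = t + kr. Start with the trivial braid on rq strands together with an unknot J_{1,rq} encircling all rq strands; insert a positive half-twist Δ_{1,rq}, followed by a negative half-twist on strands 1 through (r−t)q (the inverse of Δ_{1,(r−t)q}) and a positive half-twist Δ_{(r−t)q+1,rq}; then perform 1/k-Dehn filling on J_{1,rq}. The resulting braid is the torus braid (rq, sq), i.e. (σ_1⋯σ_{rq−1})^{sq}. In particular, in the braid group on rq strands, Δ_{1,rq} · Δ_{1,(r−t)q}^{−1} · Δ_{(r−t)q+1,rq} = (σ_1⋯σ_{rq−1})^{tq}. -/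

import Mathlib

/-- The braid relations among the Artin generators `σ_1, …, σ_m`, where the index
`i : Fin m` stands for the generator `σ_{i+1}`: distant generators commute, and
adjacent generators satisfy `σ_i σ_{i+1} σ_i = σ_{i+1} σ_i σ_{i+1}`. -/
def braidRels (m : ℕ) : Set (FreeGroup (Fin m)) :=
  {x | (∃ i j : Fin m, (i : ℕ) + 2 ≤ (j : ℕ) ∧
          x = FreeGroup.of i * FreeGroup.of j * (FreeGroup.of i)⁻¹ *
              (FreeGroup.of j)⁻¹) ∨
       (∃ i j : Fin m, (i : ℕ) + 1 = (j : ℕ) ∧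
          x = FreeGroup.of i * FreeGroup.of j * FreeGroup.of i *
              (FreeGroup.of j * FreeGroup.of i * FreeGroup.of j)⁻¹)}

/-- The braid group on `n` strands, presented with Artin generators
`σ_1, …, σ_{n-1}` and the braid relations. -/
def BraidGroup (n : ℕ) : Type := PresentedGroup (braidRels (n - 1))

instance (n : ℕ) : Group (BraidGroup n) :=
  inferInstanceAs (Group (PresentedGroup (braidRels (n - 1))))

/-- The Artin generator `σ_i` (1-indexed) of the braid group on `n` strands;
out-of-range indices are interpreted as the identity. -/
def braidGen (n i : ℕ) : BraidGroup n :=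
  if h : i - 1 < n - 1 then PresentedGroup.of (⟨i - 1, h⟩ : Fin (n - 1)) else 1

/-- Interpret a word (a list of 1-indexed generator letters) as an element of the
braid group on `n` strands. -/
def wordToBraid (n : ℕ) (w : List ℕ) : BraidGroup n := (w.map (braidGen n)).prod

/-- The word of the torus braid `(p, q) = (σ_1 ⋯ σ_{p-1})^q`. -/
def torusWord (p q : ℕ) : List ℕ :=
  (List.replicate q ((List.range (p - 1)).map (· + 1))).flatten

/-- The word of the positive half-twist `Δ_{a,b}` on the strands from `a` to `b`
(1-indexed), namely `(σ_a ⋯ σ_{b-1})(σ_a ⋯ σ_{b-2}) ⋯ (σ_a)`; the negative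
half-twist is its inverse in the braid group. -/
def halfTwistWord (a b : ℕ) : List ℕ :=
  (List.range (b - a)).flatMap fun j => (List.range (b - a - j)).map (a + ·)

lemma braidRel_one {n : ℕ} {x : FreeGroup (Fin (n-1))} (hx : x ∈ braidRels (n-1)) :
    (PresentedGroup.mk (braidRels (n-1)) x : BraidGroup n) = 1 := by
  exact (QuotientGroup.eq_one_iff x).mpr (Subgroup.subset_normalClosure hx)

lemma braid_comm {n : ℕ} {i j : ℕ} (hi : 1 ≤ i) (hij : i + 2 ≤ j) :
    braidGen n i * braidGen n j = braidGen n j * braidGen n i := by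
  unfold braidGen
  by_cases hj : j - 1 < n - 1
  · have hi' : i - 1 < n - 1 := by omega
    erw [dif_pos hj, dif_pos hi']
    have hx : (FreeGroup.of (⟨i-1, hi'⟩ : Fin (n-1)) * FreeGroup.of (⟨j-1, hj⟩ : Fin (n-1)) *
        (FreeGroup.of (⟨i-1, hi'⟩ : Fin (n-1)))⁻¹ * (FreeGroup.of (⟨j-1, hj⟩ : Fin (n-1)))⁻¹)
        ∈ braidRels (n-1) := by
      left; exact ⟨_, _, by simp; omega, rfl⟩
    have h1 := braidRel_one (n := n) hx
    simp only [map_mul, map_inv] at h1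
    have : ∀ a : Fin (n-1), (PresentedGroup.mk (braidRels (n-1)) (FreeGroup.of a) : BraidGroup n)
        = PresentedGroup.of a := fun a => rfl
    rw [this, this] at h1
    exact mul_inv_eq_iff_eq_mul.mp (mul_inv_eq_one.mp h1)
  · erw [dif_neg hj, mul_one, one_mul]

lemma braid_braid {n : ℕ} {i : ℕ} (hi : 1 ≤ i) (hin : i + 1 ≤ n - 1) :
    braidGen n i * braidGen n (i+1) * braidGen n i
      = braidGen n (i+1) * braidGen n i * braidGen n (i+1) := by
  unfold braidGen
  have hj : (i+1) - 1 < n - 1 := by omega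
  have hi' : i - 1 < n - 1 := by omega
  erw [dif_pos hj, dif_pos hi']
  have hx : (FreeGroup.of (⟨i-1, hi'⟩ : Fin (n-1)) * FreeGroup.of (⟨(i+1)-1, hj⟩ : Fin (n-1)) *
      FreeGroup.of (⟨i-1, hi'⟩ : Fin (n-1)) *
      (FreeGroup.of (⟨(i+1)-1, hj⟩ : Fin (n-1)) * FreeGroup.of (⟨i-1, hi'⟩ : Fin (n-1)) *
        FreeGroup.of (⟨(i+1)-1, hj⟩ : Fin (n-1)))⁻¹)
      ∈ braidRels (n-1) := by
    right; exact ⟨_, _, by simp; omega, rfl⟩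
  have h1 := braidRel_one (n := n) hx
  simp only [map_mul, map_inv] at h1
  have hof : ∀ a : Fin (n-1), (PresentedGroup.mk (braidRels (n-1)) (FreeGroup.of a) : BraidGroup n)
      = PresentedGroup.of a := fun a => rfl
  rw [hof, hof] at h1
  exact mul_inv_eq_one.mp h1

def chainWord (a b : ℕ) : List ℕ := (List.range (b - a)).map (a + ·)

lemma wordToBraid_nil (n : ℕ) : wordToBraid n [] = 1 := rfl

lemma wordToBraid_append (n : ℕ) (w1 w2 : List ℕ) :
    wordToBraid n (w1 ++ w2) = wordToBraid n w1 * wordToBraid n w2 := by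
  simp [wordToBraid]

lemma wordToBraid_cons (n : ℕ) (x : ℕ) (w : List ℕ) :
    wordToBraid n (x :: w) = braidGen n x * wordToBraid n w := by
  simp [wordToBraid]

lemma wordToBraid_singleton (n x : ℕ) : wordToBraid n [x] = braidGen n x := by
  simp [wordToBraid]

lemma gen_word_comm {n : ℕ} {i : ℕ} {w : List ℕ}
    (h : ∀ y ∈ w, (1 ≤ i ∧ i + 2 ≤ y) ∨ (1 ≤ y ∧ y + 2 ≤ i)) :
    braidGen n i * wordToBraid n w = wordToBraid n w * braidGen n i := by
  induction w with
  | nil => simp [wordToBraid_nil]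
  | cons x xs ih =>
    have hx := h x (List.mem_cons_self)
    have hcomm : braidGen n i * braidGen n x = braidGen n x * braidGen n i := by
      rcases hx with ⟨h1, h2⟩ | ⟨h1, h2⟩
      · exact braid_comm h1 h2
      · exact (braid_comm h1 h2).symm
    rw [wordToBraid_cons, ← mul_assoc, hcomm, mul_assoc,
      ih (fun y hy => h y (List.mem_cons_of_mem _ hy)), mul_assoc]

lemma word_comm {n : ℕ} {w1 w2 : List ℕ}
    (h : ∀ x ∈ w1, ∀ y ∈ w2, (1 ≤ x ∧ x + 2 ≤ y) ∨ (1 ≤ y ∧ y + 2 ≤ x)) :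
    wordToBraid n w1 * wordToBraid n w2 = wordToBraid n w2 * wordToBraid n w1 := by
  induction w1 with
  | nil => simp [wordToBraid_nil]
  | cons x xs ih =>
    rw [wordToBraid_cons, mul_assoc, ih (fun x hx => h x (List.mem_cons_of_mem _ hx)),
      ← mul_assoc, gen_word_comm (fun y hy => h x (List.mem_cons_self) y hy), mul_assoc]

lemma mem_chainWord {a b x : ℕ} (hx : x ∈ chainWord a b) : a ≤ x ∧ x < b := by
  simp only [chainWord, List.mem_map, List.mem_range] at hx
  obtain ⟨i, hi, rfl⟩ := hx
  omega

lemma mem_halfTwistWord {a b x : ℕ} (hx : x ∈ halfTwistWord a b) : a ≤ x ∧ x < b := by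
  simp only [halfTwistWord, List.mem_flatMap, List.mem_map, List.mem_range] at hx
  obtain ⟨j, hj, i, hi, rfl⟩ := hx
  omega

lemma chainWord_append {a c b : ℕ} (hac : a ≤ c) (hcb : c ≤ b) :
    chainWord a b = chainWord a c ++ chainWord c b := by
  unfold chainWord
  have : b - a = (c - a) + (b - c) := by omega
  rw [this, List.range_add, List.map_append, List.map_map]
  congr 1
  refine List.map_congr_left (fun x hx => ?_)
  simp only [Function.comp_apply]
  omega

lemma chainWord_pair (i : ℕ) : chainWord i (i+2) = [i, i+1] := by
  simp [chainWord, List.range_succ]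

lemma chain_shift {n a b i : ℕ} (ha : 1 ≤ a) (hai : a ≤ i) (hib : i + 2 ≤ b) (hbn : b ≤ n) :
    wordToBraid n (chainWord a b) * braidGen n i
      = braidGen n (i+1) * wordToBraid n (chainWord a b) := by
  have hsplit : chainWord a b = chainWord a i ++ ([i, i+1] ++ chainWord (i+2) b) := by
    rw [← chainWord_pair, ← chainWord_append (by omega) (by omega),
      ← chainWord_append (by omega) (by omega)]
  rw [hsplit, wordToBraid_append, wordToBraid_append]
  have hA : ∀ x ∈ chainWord a i, (1 ≤ (i+1) ∧ (i+1) + 2 ≤ x) ∨ (1 ≤ x ∧ x + 2 ≤ i+1) := by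
    intro x hx; have := mem_chainWord hx; right; omega
  have hB : ∀ y ∈ chainWord (i+2) b, (1 ≤ i ∧ i + 2 ≤ y) ∨ (1 ≤ y ∧ y + 2 ≤ i) := by
    intro y hy; have := mem_chainWord hy; left; omega
  have hbr : braidGen n i * braidGen n (i+1) * braidGen n i
      = braidGen n (i+1) * braidGen n i * braidGen n (i+1) := braid_braid (by omega) (by omega)
  calc wordToBraid n (chainWord a i) * (wordToBraid n [i, i+1] * wordToBraid n (chainWord (i+2) b))
        * braidGen n i
      = wordToBraid n (chainWord a i) * (braidGen n i * braidGen n (i+1) * braidGen n i)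
          * wordToBraid n (chainWord (i+2) b) := by
        rw [show wordToBraid n [i, i+1] = braidGen n i * braidGen n (i+1) by
          simp [wordToBraid]]
        rw [mul_assoc, mul_assoc, mul_assoc, ← gen_word_comm hB]
        group
    _ = wordToBraid n (chainWord a i) * (braidGen n (i+1) * braidGen n i * braidGen n (i+1))
          * wordToBraid n (chainWord (i+2) b) := by rw [hbr]
    _ = braidGen n (i+1) * (wordToBraid n (chainWord a i)
          * (wordToBraid n [i, i+1] * wordToBraid n (chainWord (i+2) b))) := by
        rw [show wordToBraid n [i, i+1] = braidGen n i * braidGen n (i+1) by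
          simp [wordToBraid]]
        rw [← mul_assoc, ← mul_assoc, ← gen_word_comm hA]
        group

lemma chain_shift_word {n a b : ℕ} (w : List ℕ) (ha : 1 ≤ a)
    (hw : ∀ x ∈ w, a ≤ x ∧ x + 2 ≤ b) (hbn : b ≤ n) :
    wordToBraid n (chainWord a b) * wordToBraid n w
      = wordToBraid n (w.map (· + 1)) * wordToBraid n (chainWord a b) := by
  induction w with
  | nil => simp [wordToBraid_nil]
  | cons x xs ih =>
    have hx := hw x (List.mem_cons_self)
    rw [wordToBraid_cons, List.map_cons, wordToBraid_cons, ← mul_assoc,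
      chain_shift ha hx.1 hx.2 hbn, mul_assoc,
      ih (fun y hy => hw y (List.mem_cons_of_mem _ hy)), ← mul_assoc]

lemma halfTwistWord_decomp {a c : ℕ} (hac : a ≤ c) :
    halfTwistWord a (c+1) = chainWord a (c+1) ++ halfTwistWord a c := by
  unfold halfTwistWord chainWord
  have h1 : (c+1) - a = (c - a) + 1 := by omega
  rw [h1, List.range_succ_eq_map, List.flatMap_cons, List.flatMap_map]
  congr 1
  · simp [List.range_succ_eq_map]
  · have : ∀ j ∈ List.range (c - a),
        (fun j => List.map (fun x => a + x) (List.range (c - a + 1 - (j+1)))) j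
          = (fun j => List.map (fun x => a + x) (List.range (c - a - j))) j := by
      intro j hj
      simp only
      have h2 : c - a + 1 - (j+1) = c - a - j := by omega
      rw [h2]
    exact List.flatMap_congr this

lemma halfTwistWord_map_succ (a b : ℕ) :
    (halfTwistWord a b).map (· + 1) = halfTwistWord (a+1) (b+1) := by
  unfold halfTwistWord
  rw [List.map_flatMap]
  have h1 : (b+1) - (a+1) = b - a := by omega
  rw [h1]
  refine List.flatMap_congr (fun j hj => ?_)
  rw [List.mem_range] at hj
  rw [List.map_map]
  refine List.map_congr_left (fun x hx => ?_)
  simp only [Function.comp_apply]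
  omega

lemma halfTwistWord_empty {a b : ℕ} (h : b ≤ a) : halfTwistWord a b = [] := by
  unfold halfTwistWord
  have : b - a = 0 := by omega
  rw [this]
  rfl

lemma halfTwist_step {n a b : ℕ} (ha : 1 ≤ a) (hab : a ≤ b) (hbn : b ≤ n) :
    wordToBraid n (halfTwistWord a b)
      = wordToBraid n (halfTwistWord (a+1) b) * wordToBraid n (chainWord a b) := by
  rcases Nat.eq_or_lt_of_le hab with rfl | hlt
  · rw [halfTwistWord_empty le_rfl, halfTwistWord_empty (by omega)]
    have : chainWord a a = [] := by simp [chainWord]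
    rw [this, wordToBraid_nil, one_mul]
  · obtain ⟨c, rfl⟩ : ∃ c, b = c + 1 := ⟨b - 1, by omega⟩
    rw [halfTwistWord_decomp (by omega), wordToBraid_append]
    rw [chain_shift_word (halfTwistWord a c) ha
      (fun x hx => by have := mem_halfTwistWord hx; omega) hbn]
    rw [halfTwistWord_map_succ]

lemma main_induction {n : ℕ} : ∀ d m, 1 ≤ m → m + d = n →
    wordToBraid n (halfTwistWord 1 n) * (wordToBraid n (halfTwistWord 1 m))⁻¹ *
      wordToBraid n (halfTwistWord (m+1) n)
      = (wordToBraid n (chainWord 1 n)) ^ d := by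
  intro d
  induction d with
  | zero =>
    intro m hm hmn
    subst hmn
    simp only [Nat.add_zero]
    rw [show halfTwistWord (m+1) m = [] from halfTwistWord_empty (by omega),
      wordToBraid_nil, mul_one, mul_inv_cancel, pow_zero]
  | succ d ih =>
    intro m hm hmn
    have h1 : m + 1 + d = n := by omega
    have hih := ih (m+1) (by omega) h1
    -- Δ_{m+1,n} = Δ_{m+2,n} * chain (m+1) n
    have hstep : wordToBraid n (halfTwistWord (m+1) n)
        = wordToBraid n (halfTwistWord (m+2) n) * wordToBraid n (chainWord (m+1) n) := by
      have := halfTwist_step (n := n) (a := m+1) (b := n) (by omega) (by omega) le_rfl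
      simpa using this
    -- Δ_{1,m+1} = chain 1 (m+1) * Δ_{1,m}
    have hdec : wordToBraid n (halfTwistWord 1 (m+1))
        = wordToBraid n (chainWord 1 (m+1)) * wordToBraid n (halfTwistWord 1 m) := by
      rw [halfTwistWord_decomp (by omega), wordToBraid_append]
    -- chain 1 (m+1) commutes with Δ_{m+2,n}
    have hcomm : wordToBraid n (chainWord 1 (m+1)) * wordToBraid n (halfTwistWord (m+2) n)
        = wordToBraid n (halfTwistWord (m+2) n) * wordToBraid n (chainWord 1 (m+1)) := by
      refine word_comm (fun x hx y hy => ?_)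
      have h2 := mem_chainWord hx
      have h3 := mem_halfTwistWord hy
      left; omega
    -- chain 1 n = chain 1 (m+1) ++ chain (m+1) n
    have hchain : wordToBraid n (chainWord 1 n)
        = wordToBraid n (chainWord 1 (m+1)) * wordToBraid n (chainWord (m+1) n) := by
      rw [← wordToBraid_append, ← chainWord_append (by omega) (by omega)]
    have key : (wordToBraid n (halfTwistWord 1 m))⁻¹ * wordToBraid n (halfTwistWord (m+1) n)
        = (wordToBraid n (halfTwistWord 1 (m+1)))⁻¹ * wordToBraid n (halfTwistWord (m+2) n)
          * wordToBraid n (chainWord 1 n) := by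
      rw [hchain, hdec, hstep, mul_inv_rev]
      calc (wordToBraid n (halfTwistWord 1 m))⁻¹
            * (wordToBraid n (halfTwistWord (m+2) n) * wordToBraid n (chainWord (m+1) n))
          = (wordToBraid n (halfTwistWord 1 m))⁻¹ * (wordToBraid n (chainWord 1 (m+1)))⁻¹
            * (wordToBraid n (chainWord 1 (m+1)) * wordToBraid n (halfTwistWord (m+2) n))
            * wordToBraid n (chainWord (m+1) n) := by group
        _ = (wordToBraid n (halfTwistWord 1 m))⁻¹ * (wordToBraid n (chainWord 1 (m+1)))⁻¹
            * (wordToBraid n (halfTwistWord (m+2) n) * wordToBraid n (chainWord 1 (m+1)))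
            * wordToBraid n (chainWord (m+1) n) := by rw [hcomm]
        _ = (wordToBraid n (halfTwistWord 1 m))⁻¹ * (wordToBraid n (chainWord 1 (m+1)))⁻¹
            * wordToBraid n (halfTwistWord (m+2) n)
            * (wordToBraid n (chainWord 1 (m+1)) * wordToBraid n (chainWord (m+1) n)) := by
              group
    rw [pow_succ, ← hih]
    rw [mul_assoc, key]
    group

lemma torusWord_pow (n c : ℕ) :
    wordToBraid n (torusWord n c) = (wordToBraid n (chainWord 1 n)) ^ c := by
  have hL : (List.range (n - 1)).map (· + 1) = chainWord 1 n := by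
    refine List.map_congr_left (fun x hx => ?_)
    omega
  induction c with
  | zero => simp [torusWord, wordToBraid_nil]
  | succ c ih =>
    rw [torusWord, List.replicate_succ, List.flatten_cons, ← torusWord,
      wordToBraid_append, hL, ih, pow_succ']

/-- Let `r, q, s > 0` with `s` not a multiple of `r`, and let `0 < t < r`, `k ≥ 0`
with `s = t + kr`. Starting from the trivial braid on `rq` strands with an unknot
`J_{1,rq}` encircling all `rq` strands, insert a positive half-twist `Δ_{1,rq}`,
then a negative half-twist on strands `1` through `(r-t)q` (the inverse of
`Δ_{1,(r-t)q}`), then a positive half-twist `Δ_{(r-t)q+1,rq}`; performing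
`1/k`-Dehn filling on `J_{1,rq}` inserts `k` full twists `(rq, k·rq)` on the `rq`
strands, and the resulting braid is the torus braid `(rq, sq) = (σ_1⋯σ_{rq-1})^{sq}`.
In particular, in the braid group on `rq` strands,
`Δ_{1,rq} · Δ_{1,(r-t)q}⁻¹ · Δ_{(r-t)q+1,rq} = (σ_1⋯σ_{rq-1})^{tq}`. -/
theorem halfTwists_give_torus_braid (r q s t k : ℕ)
    (hr : 0 < r) (hq : 0 < q) (hs : 0 < s) (hnd : ¬ r ∣ s)
    (ht : 0 < t) (htr : t < r) (hstk : s = t + k * r) :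
    wordToBraid (r * q) (torusWord (r * q) (k * (r * q))) *
        (wordToBraid (r * q) (halfTwistWord 1 (r * q)) *
          (wordToBraid (r * q) (halfTwistWord 1 ((r - t) * q)))⁻¹ *
          wordToBraid (r * q) (halfTwistWord ((r - t) * q + 1) (r * q))) =
      wordToBraid (r * q) (torusWord (r * q) (s * q)) ∧
    wordToBraid (r * q) (halfTwistWord 1 (r * q)) *
        (wordToBraid (r * q) (halfTwistWord 1 ((r - t) * q)))⁻¹ *
        wordToBraid (r * q) (halfTwistWord ((r - t) * q + 1) (r * q)) =
      wordToBraid (r * q) (torusWord (r * q) (t * q)) := by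
  set n := r * q with hn
  have hm1 : 1 ≤ (r - t) * q := Nat.mul_pos (by omega) hq
  have hmd : (r - t) * q + t * q = n := by
    rw [hn, ← Nat.add_mul]
    congr 1
    omega
  have h2 := main_induction (t * q) ((r - t) * q) hm1 hmd
  rw [← torusWord_pow] at h2
  refine ⟨?_, h2⟩
  rw [h2, torusWord_pow, torusWord_pow, torusWord_pow, ← pow_add]
  congr 1
  subst hstk
  rw [hn]
  ring
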